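/- arXiv:2003.10044 — 4 statements merged into one kernel-verified Lean document; each statement's English description precedes it below -/
import Mathlib

section
/- Let q(s) = Σ_{i=1}^v q_i(s) e^{−h_i s} be a neutral quasi-polynomial with commensurate delays h_i = n_i/N (n_i ∈ ℕ, N a positive integer) such that deg q_v = deg q_1 (so the asymptotic polynomial p has exact degree n_v − n_1), and let q̄(s) = −q(−s) e^{−h_v s} be its conjugate quasi-polynomial. Suppose there exists ε > 0 such that the set {s ∈ ℂ : |Re s| < ε and q̄(s) = 0} is finite. Then the set {s ∈ ℂ : Re s ≥ 0 and q̄(s) = 0} is finite if and only if every complex root x of the asymptotic polynomial p of q satisfies |x| < 1. -/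
/-!
Put `z = e^{-s/N}` and `k_i = n_i - n_1`. Then `q(s) e^{h_1 s} = ∑ q_i(s) z^{k_i}`, and as
`|s| → ∞`, `q(s) e^{h_1 s} / s^d` differs from `L(z)` by at most `ε ∑ |z|^{k_i}`, where
`d = deg q_1` and `L = lc(q_1) p`. The zeros of `q̄` in `Re s ≥ 0` are the negatives of the zeros
of `q` in `Re s ≤ 0`, where `|z| ≥ 1`.

If every root of `p` lies in the open unit disc, then `|L(z)| ≥ c |z|^{deg L}` for `|z| ≥ 1`
(apply compactness to the reversed polynomial on the closed unit disc); since `deg L = k_v`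
dominates every `k_i`, `q` has no zeros of large modulus in `Re s ≤ 0`, and an entire function
has only finitely many zeros in a bounded set.

Conversely, if `p(x) = 0` with `|x| ≥ 1`, write `x = e^{-s_0/N}` with `Re s_0 ≤ 0`. As `z` is
`2πiN`-periodic in `s`, near every far translate `s_0 + 2πiNj` the function `q(s) e^{h_1 s} / s^d`
is uniformly close to `w ↦ L(x e^{-w/N})`, which vanishes at `w = 0` but not on a small circle
around it. The minimum modulus principle then gives a zero of `q` near each translate: infinitely
many zeros of `q̄` with `Re s > -ε`, which contradicts the two finiteness hypotheses.
-/

open Complex Polynomial Filter Topology Metric Bornology Asymptotics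

namespace Differentiable

variable {f : ℂ → ℂ}

theorem eventually_ne_zero_codiscrete (hf : Differentiable ℂ f) (hne : ∃ w, f w ≠ 0) :
    ∀ᶠ s in codiscreteWithin Set.univ, f s ≠ 0 := by
  refine ((analyticOnNhd_univ_iff_differentiable.2 hf)
    |>.eqOn_zero_or_eventually_ne_zero_of_preconnected isPreconnected_univ).resolve_left
    fun h0 => ?_
  obtain ⟨w, hw⟩ := hne
  exact hw (h0 (Set.mem_univ w))

theorem finite_of_isBounded_of_forall_eq_zero (hf : Differentiable ℂ f) (hne : ∃ w, f w ≠ 0)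
    {S : Set ℂ} (hS : IsBounded S) (hzero : ∀ s ∈ S, f s = 0) : S.Finite :=
  (hS.isCompact_closure.finite_sdiff_of_mem_codiscreteWithin
    (codiscreteWithin_mono (Set.subset_univ _) (hf.eventually_ne_zero_codiscrete hne))).subset
    fun s hs => ⟨subset_closure hs, fun h => h (hzero s hs)⟩

theorem exists_sphere_forall_le_norm (hf : Differentiable ℂ f) (hne : ∃ w, f w ≠ 0) (a : ℂ)
    {ε : ℝ} (hε : 0 < ε) : ∃ r ∈ Set.Ioo 0 ε, ∃ m > 0, ∀ w ∈ sphere a r, m ≤ ‖f w‖ := by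
  have hiso : ∀ᶠ w in 𝓝[≠] a, f w ≠ 0 := by
    have := mem_codiscreteWithin_iff_forall_mem_nhdsNE.1 (hf.eventually_ne_zero_codiscrete hne) a
      (Set.mem_univ a)
    rwa [Set.compl_univ, Set.union_empty] at this
  obtain ⟨δ, hδ, hδf⟩ := Metric.eventually_nhds_iff.1 (eventually_nhdsWithin_iff.1 hiso)
  set r := min (δ / 2) (ε / 2)
  have hr : 0 < r := by positivity
  have hne0 : ∀ w ∈ sphere a r, f w ≠ 0 := fun w hw =>
    hδf (by rw [mem_sphere.1 hw]; exact (min_le_left _ _).trans_lt (half_lt_self hδ))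
      (by rintro rfl; simp [hr.ne] at hw)
  obtain ⟨w₀, hw₀, hmin⟩ := (isCompact_sphere a r).exists_isMinOn
    (NormedSpace.sphere_nonempty.2 hr.le) hf.continuous.norm.continuousOn
  exact ⟨r, ⟨hr, (min_le_right _ _).trans_lt (half_lt_self hε)⟩, ‖f w₀‖,
    norm_pos_iff.2 (hne0 w₀ hw₀), fun w hw => hmin hw⟩

end Differentiable

theorem exists_mem_closedBall_eq_zero_of_norm_lt {F : ℂ → ℂ} {c : ℂ} {r : ℝ} (hr : 0 < r)
    (hF : DifferentiableOn ℂ F (closedBall c r)) (hlt : ∀ σ ∈ sphere c r, ‖F c‖ < ‖F σ‖) :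
    ∃ σ ∈ closedBall c r, F σ = 0 := by
  by_contra! hne
  obtain ⟨σ₀, hσ₀, hmin⟩ := (isCompact_sphere c r).exists_isMinOn
    (NormedSpace.sphere_nonempty.2 hr.le) (hF.continuousOn.norm.mono sphere_subset_closedBall)
  have hinv : DiffContOnCl ℂ (fun σ => (F σ)⁻¹) (ball c r) := by
    apply DifferentiableOn.diffContOnCl
    rw [closure_ball c hr.ne']
    exact hF.inv hne
  have hσ₀pos : 0 < ‖F σ₀‖ := norm_pos_iff.2 (hne σ₀ (sphere_subset_closedBall hσ₀))
  have hcenter := Complex.norm_le_of_forall_mem_frontier_norm_le isBounded_ball hinv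
    (C := ‖F σ₀‖⁻¹) (fun σ hσ => by
      rw [frontier_ball c hr.ne'] at hσ
      rw [norm_inv]
      exact inv_anti₀ hσ₀pos (hmin hσ))
    (subset_closure (mem_ball_self hr))
  rw [norm_inv] at hcenter
  exact (hlt σ₀ hσ₀).not_ge ((inv_le_inv₀ (norm_pos_iff.2 (hne c (mem_closedBall_self hr.le)))
    hσ₀pos).1 hcenter)

theorem exists_mem_closedBall_eq_zero_of_norm_sub_le {F g : ℂ → ℂ} {c : ℂ} {r η : ℝ}
    (hr : 0 < r) (hF : DifferentiableOn ℂ F (closedBall c r)) (hgc : g c = 0)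
    (hclose : ∀ σ ∈ closedBall c r, ‖F σ - g σ‖ ≤ η) (hlarge : ∀ σ ∈ sphere c r, 2 * η < ‖g σ‖) :
    ∃ σ ∈ closedBall c r, F σ = 0 := by
  refine exists_mem_closedBall_eq_zero_of_norm_lt hr hF fun σ hσ => ?_
  have hc := hclose c (mem_closedBall_self hr.le)
  have hσ' := hclose σ (sphere_subset_closedBall hσ)
  rw [hgc, sub_zero] at hc
  have := norm_sub_norm_le (g σ) (F σ)
  rw [norm_sub_rev] at this
  linarith [hlarge σ hσ]

namespace Polynomial

theorem tendsto_eval_div_pow_cobounded {𝕜 : Type*} [NormedField 𝕜] (A : 𝕜[X]) {d : ℕ}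
    (hA : A.natDegree ≤ d) :
    Tendsto (fun s => A.eval s / s ^ d) (cobounded 𝕜) (𝓝 (A.coeff d)) := by
  have hlow : (fun s => A.eval s - A.coeff d * s ^ d) =o[cobounded 𝕜] (· ^ d) := by
    simp only [eval_eq_sum_range' (Nat.lt_succ_of_le hA), Finset.sum_range_succ,
      add_sub_cancel_right]
    exact IsLittleO.fun_sum fun j hj =>
      (isLittleO_pow_pow_cobounded_of_lt (Finset.mem_range.1 hj)).const_mul_left _
  refine (hlow.tendsto_div_nhds_zero.add_const (A.coeff d)).congr' ?_ |>.mono_right (by simp)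
  filter_upwards [eventually_ne_cobounded 0] with s hs
  field_simp
  ring

theorem eval_eq_eval_reverse_inv_mul_pow {𝕜 : Type*} [Field 𝕜] (L : 𝕜[X]) {z : 𝕜} (hz : z ≠ 0) :
    L.eval z = L.reverse.eval z⁻¹ * z ^ L.natDegree := by
  let := invertibleOfNonzero hz
  have := eval₂_reverse_mul_pow (RingHom.id 𝕜) z L
  rw [invOf_eq_inv] at this
  exact this.symm

theorem exists_pos_mul_pow_natDegree_le_norm_eval {𝕜 : Type*} [NontriviallyNormedField 𝕜]
    [ProperSpace 𝕜] {L : 𝕜[X]} (hL : L ≠ 0) (hroots : ∀ z, L.IsRoot z → ‖z‖ < 1) :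
    ∃ c > 0, ∀ z : 𝕜, 1 ≤ ‖z‖ → c * ‖z‖ ^ L.natDegree ≤ ‖L.eval z‖ := by
  have hne : ∀ w ∈ closedBall (0 : 𝕜) 1, L.reverse.eval w ≠ 0 := by
    intro w hw h0
    rcases eq_or_ne w 0 with rfl | hw0
    · rw [← coeff_zero_eq_eval_zero, coeff_zero_reverse] at h0
      exact hL (leadingCoeff_eq_zero.1 h0)
    · have hroot := hroots w⁻¹ (by
        rw [IsRoot, eval_eq_eval_reverse_inv_mul_pow L (inv_ne_zero hw0), inv_inv, h0, zero_mul])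
      rw [mem_closedBall_zero_iff] at hw
      rw [norm_inv] at hroot
      exact hroot.not_ge (one_le_inv₀ (norm_pos_iff.2 hw0) |>.2 hw)
  obtain ⟨w₀, hw₀, hmin⟩ := (isCompact_closedBall (0 : 𝕜) 1).exists_isMinOn
    ⟨0, mem_closedBall_self zero_le_one⟩ L.reverse.continuous.norm.continuousOn
  refine ⟨‖L.reverse.eval w₀‖, norm_pos_iff.2 (hne w₀ hw₀), fun z hz => ?_⟩
  have hz0 : z ≠ 0 := norm_pos_iff.1 (zero_lt_one.trans_le hz)
  rw [eval_eq_eval_reverse_inv_mul_pow L hz0, norm_mul, norm_pow]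
  gcongr
  exact hmin (by rw [mem_closedBall_zero_iff, norm_inv]; exact inv_le_one_of_one_le₀ hz)

end Polynomial

section AsymptoticPoly

variable {ι R : Type*} [Fintype ι]

/-- For `A = (q_i)`, `k_i = n_i - n_1` and `d = deg q_1`, this is the paper's asymptotic
polynomial multiplied by the leading coefficient of `q_1`. -/
noncomputable def asymptoticPoly [Semiring R] (A : ι → R[X]) (k : ι → ℕ) (d : ℕ) : R[X] :=
  ∑ i, C ((A i).coeff d) * X ^ k i

theorem eval_asymptoticPoly [CommSemiring R] (A : ι → R[X]) (k : ι → ℕ) (d : ℕ) (z : R) :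
    (asymptoticPoly A k d).eval z = ∑ i, (A i).coeff d * z ^ k i := by
  simp [asymptoticPoly, eval_finsetSum]

theorem coeff_asymptoticPoly [Semiring R] (A : ι → R[X]) {k : ι → ℕ} (hk : Function.Injective k)
    (d : ℕ) (i : ι) : (asymptoticPoly A k d).coeff (k i) = (A i).coeff d := by
  rw [asymptoticPoly, finsetSum_coeff, Finset.sum_eq_single i]
  · simp
  · intro j _ hji
    rw [coeff_C_mul_X_pow, if_neg (hk.ne hji).symm]
  · simp

theorem asymptoticPoly_ne_zero [Semiring R] {A : ι → R[X]} {k : ι → ℕ}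
    (hk : Function.Injective k) {d : ℕ} {i : ι} (hi : (A i).coeff d ≠ 0) :
    asymptoticPoly A k d ≠ 0 := fun h0 =>
  hi (by rw [← coeff_asymptoticPoly A hk, h0, coeff_zero])

theorem le_natDegree_asymptoticPoly [Semiring R] {A : ι → R[X]} {k : ι → ℕ}
    (hk : Function.Injective k) {d : ℕ} {i₀ : ι} (hi₀ : (A i₀).coeff d ≠ 0)
    (hmax : ∀ i, k i ≤ k i₀) (i : ι) : k i ≤ (asymptoticPoly A k d).natDegree :=
  (hmax i).trans (le_natDegree_of_ne_zero (by rwa [coeff_asymptoticPoly A hk]))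

theorem eventually_norm_sum_eval_div_pow_sub_le {𝕜 : Type*} [NormedField 𝕜] (A : ι → 𝕜[X])
    (k : ι → ℕ) {d : ℕ} (hA : ∀ i, (A i).natDegree ≤ d) {ε : ℝ} (hε : 0 < ε) :
    ∀ᶠ s in cobounded 𝕜, ∀ z : 𝕜,
      ‖(∑ i, (A i).eval s * z ^ k i) / s ^ d - (asymptoticPoly A k d).eval z‖ ≤
        ε * ∑ i, ‖z‖ ^ k i := by
  filter_upwards [eventually_all.2 fun i =>
    ((A i).tendsto_eval_div_pow_cobounded (hA i)).eventually (closedBall_mem_nhds _ hε)] with s hs z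
  rw [eval_asymptoticPoly, Finset.sum_div, ← Finset.sum_sub_distrib, Finset.mul_sum]
  refine (norm_sum_le _ _).trans (Finset.sum_le_sum fun i _ => ?_)
  calc ‖(A i).eval s * z ^ k i / s ^ d - (A i).coeff d * z ^ k i‖
      = ‖(A i).eval s / s ^ d - (A i).coeff d‖ * ‖z‖ ^ k i := by
        rw [← norm_pow, ← norm_mul, sub_mul, mul_div_right_comm]
    _ ≤ ε * ‖z‖ ^ k i := by
        gcongr
        simpa [dist_eq_norm] using hs i

end AsymptoticPoly

theorem norm_exp_neg_div_ofReal (s : ℂ) (N : ℝ) : ‖exp (-s / N)‖ = Real.exp (-s.re / N) := by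
  rw [norm_exp, neg_div, neg_re, div_ofReal_re, neg_div]

theorem exists_re_nonpos_exp_neg_div_eq {N : ℝ} (hN : 0 < N) {x : ℂ} (hx : 1 ≤ ‖x‖) :
    ∃ s₀ : ℂ, s₀.re ≤ 0 ∧ exp (-s₀ / N) = x := by
  have hx0 : x ≠ 0 := norm_pos_iff.1 (zero_lt_one.trans_le hx)
  refine ⟨-N * log x, ?_, ?_⟩
  · rw [neg_mul, neg_re, re_ofReal_mul, log_re, neg_nonpos]
    exact mul_nonneg hN.le (Real.log_nonneg hx)
  · rw [neg_mul, neg_neg, mul_div_cancel_left₀ _ (ofReal_ne_zero.2 hN.ne'), exp_log hx0]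

theorem exp_neg_div_eq_mul_exp_neg_sub_div {N : ℝ} (hN : N ≠ 0) {s₀ x : ℂ}
    (hs₀ : exp (-s₀ / N) = x) (j : ℕ) (σ : ℂ) :
    exp (-σ / N) = x * exp (-(σ - (s₀ + (2 * Real.pi * N * j : ℝ) * I)) / N) := by
  have hN' : (N : ℂ) ≠ 0 := ofReal_ne_zero.2 hN
  rw [← hs₀, ← exp_add, ← mul_one (exp (-σ / N)), ← exp_nat_mul_two_pi_mul_I j, ← exp_add]
  congr 1
  push_cast
  field_simp
  ring

theorem eventually_lt_two_pi_mul_natCast {N : ℝ} (hN : 0 < N) (a : ℝ) :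
    ∀ᶠ j : ℕ in atTop, a < 2 * Real.pi * N * j :=
  (tendsto_natCast_atTop_atTop.const_mul_atTop (by positivity)).eventually_gt_atTop a

theorem le_norm_of_mem_closedBall_add_mul_I {s₀ σ : ℂ} {t r : ℝ}
    (hσ : σ ∈ closedBall (s₀ + t * I) r) : t - ‖s₀‖ - r ≤ ‖σ‖ := by
  have ht : ‖(t : ℂ) * I‖ = |t| := by rw [norm_mul, norm_I, mul_one, norm_real, Real.norm_eq_abs]
  have h1 := norm_sub_le (σ - s₀) (σ - (s₀ + t * I))
  have h2 := norm_sub_le σ s₀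
  rw [show σ - s₀ - (σ - (s₀ + t * I)) = t * I by ring, ht] at h1
  linarith [le_abs_self t, mem_closedBall_iff_norm.1 hσ]

theorem Polynomial.exists_eval_mul_exp_ne_zero {L : ℂ[X]} (hL : L ≠ 0) {x : ℂ} (hx : x ≠ 0)
    {N : ℝ} (hN : N ≠ 0) : ∃ w : ℂ, L.eval (x * exp (-w / N)) ≠ 0 := by
  obtain ⟨y, hy⟩ :=
    ((finite_setOfPred_isRoot hL).union (Set.finite_singleton 0)).infinite_compl.nonempty
  simp only [Set.mem_compl_iff, Set.mem_union, Set.mem_ofPred_eq, Set.mem_singleton_iff,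
    not_or] at hy
  refine ⟨-N * log (y / x), ?_⟩
  rw [neg_mul, neg_neg, mul_div_cancel_left₀ _ (ofReal_ne_zero.2 hN),
    exp_log (div_ne_zero hy.2 hx), mul_div_cancel₀ _ hx]
  exact hy.1

section CommensurateQuasiPoly

variable {ι : Type*} [Fintype ι] (A : ι → ℂ[X]) (k : ι → ℕ) {d : ℕ} {N : ℝ}

/-- For `A = (q_i)` and `h_i - h_1 = k_i / N`, this is `q(s) e^{h_1 s}`. -/
noncomputable def commensurateQuasiPoly (N : ℝ) (s : ℂ) : ℂ :=
  ∑ i, (A i).eval s * exp (-s / N) ^ k i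

theorem differentiable_commensurateQuasiPoly (N : ℝ) :
    Differentiable ℂ (commensurateQuasiPoly A k N) := by
  unfold commensurateQuasiPoly
  fun_prop

variable {A k}

theorem isBounded_setOf_re_nonpos_commensurateQuasiPoly_eq_zero
    (hA : ∀ i, (A i).natDegree ≤ d) (hN : 0 < N) (hL : asymptoticPoly A k d ≠ 0)
    (hk : ∀ i, k i ≤ (asymptoticPoly A k d).natDegree)
    (hroots : ∀ z, (asymptoticPoly A k d).IsRoot z → ‖z‖ < 1) :
    IsBounded {s | s.re ≤ 0 ∧ commensurateQuasiPoly A k N s = 0} := by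
  set L := asymptoticPoly A k d
  obtain ⟨c, hc, hlow⟩ := L.exists_pos_mul_pow_natDegree_le_norm_eval hL hroots
  set n : ℝ := (Fintype.card ι : ℝ)
  have hε : 0 < c / (n + 1) := by positivity
  refine isBounded_def.2 <| mem_of_superset (eventually_norm_sum_eval_div_pow_sub_le A k hA hε)
    fun s hs ⟨hre, hzero⟩ => ?_
  set z := exp (-s / N)
  have hz : 1 ≤ ‖z‖ := by
    rw [norm_exp_neg_div_ofReal]
    exact Real.one_le_exp (div_nonneg (neg_nonneg.2 hre) hN.le)
  have hsum : ∑ i, ‖z‖ ^ k i ≤ n * ‖z‖ ^ L.natDegree := by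
    simpa [n] using Finset.sum_le_sum fun i (_ : i ∈ Finset.univ) => pow_le_pow_right₀ hz (hk i)
  have hest := hs z
  rw [← commensurateQuasiPoly, hzero, zero_div, zero_sub, norm_neg] at hest
  have hlt : c / (n + 1) * (n * ‖z‖ ^ L.natDegree) < c * ‖z‖ ^ L.natDegree := by
    rw [← mul_assoc]
    gcongr
    rw [div_mul_eq_mul_div, div_lt_iff₀ (by positivity)]
    linarith
  exact (hlow z hz).not_gt (hest.trans_lt (lt_of_le_of_lt (by gcongr) hlt))

theorem finite_setOf_re_nonpos_commensurateQuasiPoly_eq_zero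
    (hA : ∀ i, (A i).natDegree ≤ d) (hN : 0 < N) (hL : asymptoticPoly A k d ≠ 0)
    (hk : ∀ i, k i ≤ (asymptoticPoly A k d).natDegree)
    (hroots : ∀ z, (asymptoticPoly A k d).IsRoot z → ‖z‖ < 1) :
    {s | s.re ≤ 0 ∧ commensurateQuasiPoly A k N s = 0}.Finite := by
  have hbdd := isBounded_setOf_re_nonpos_commensurateQuasiPoly_eq_zero hA hN hL hk hroots
  obtain ⟨R, hR⟩ := hbdd.subset_closedBall 0
  refine (differentiable_commensurateQuasiPoly A k N).finite_of_isBounded_of_forall_eq_zero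
    ⟨((-(|R| + 1) : ℝ) : ℂ), fun h0 => ?_⟩ hbdd fun s hs => hs.2
  have := mem_closedBall_zero_iff.1 (hR ⟨by rw [ofReal_re]; linarith [abs_nonneg R], h0⟩)
  rw [norm_real, Real.norm_eq_abs, abs_neg, abs_of_pos (by positivity)] at this
  linarith [le_abs_self R]

theorem eventually_norm_commensurateQuasiPoly_div_pow_sub_le (hA : ∀ i, (A i).natDegree ≤ d)
    (M : ℝ) {η : ℝ} (hη : 0 < η) :
    ∀ᶠ σ in cobounded ℂ, ‖exp (-σ / N)‖ ≤ M →
      ‖commensurateQuasiPoly A k N σ / σ ^ d - (asymptoticPoly A k d).eval (exp (-σ / N))‖ ≤ η := by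
  set B := ∑ i, |M| ^ k i
  have hB : 0 < B + 1 := by positivity
  filter_upwards [eventually_norm_sum_eval_div_pow_sub_le A k hA (div_pos hη hB)] with σ hσ hM
  have hsum : ∑ i, ‖exp (-σ / N)‖ ^ k i ≤ B + 1 :=
    (Finset.sum_le_sum fun i _ => pow_le_pow_left₀ (norm_nonneg _) (hM.trans (le_abs_self M)) _).trans
      (le_add_of_nonneg_right zero_le_one)
  calc _ ≤ η / (B + 1) * ∑ i, ‖exp (-σ / N)‖ ^ k i := hσ _
    _ ≤ η / (B + 1) * (B + 1) := by gcongr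
    _ = η := div_mul_cancel₀ _ hB.ne'

theorem eventually_exists_commensurateQuasiPoly_eq_zero_mem_closedBall
    (hA : ∀ i, (A i).natDegree ≤ d) (hN : 0 < N) {x s₀ : ℂ} (hs₀ : exp (-s₀ / N) = x)
    (hLx : (asymptoticPoly A k d).IsRoot x) {r m : ℝ} (hr : 0 < r) (hm : 0 < m)
    (hfm : ∀ w ∈ sphere 0 r, m ≤ ‖(asymptoticPoly A k d).eval (x * exp (-w / N))‖) :
    ∀ᶠ j : ℕ in atTop, ∃ σ ∈ closedBall (s₀ + (2 * Real.pi * N * j : ℝ) * I) r,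
      commensurateQuasiPoly A k N σ = 0 := by
  set L := asymptoticPoly A k d
  set F := commensurateQuasiPoly A k N
  obtain ⟨R, hR⟩ := (isBounded_compl_iff.2 (isCobounded_def.2
    ((eventually_norm_commensurateQuasiPoly_div_pow_sub_le hA (‖x‖ * Real.exp (r / N))
      (by positivity : 0 < m / 3)).and (eventually_ne_cobounded 0)))).subset_closedBall 0
  filter_upwards [eventually_lt_two_pi_mul_natCast hN (R + ‖s₀‖ + r)] with j hj
  set c := s₀ + (2 * Real.pi * N * j : ℝ) * I
  have hgood : ∀ σ ∈ closedBall c r, (‖exp (-σ / N)‖ ≤ ‖x‖ * Real.exp (r / N) →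
      ‖F σ / σ ^ d - L.eval (exp (-σ / N))‖ ≤ m / 3) ∧ σ ≠ 0 := fun σ hσ => by
    have hfar : R < ‖σ‖ := by linarith [le_norm_of_mem_closedBall_add_mul_I hσ]
    have := mt (@hR σ) (by rwa [mem_closedBall_zero_iff, not_le])
    rwa [Set.notMem_compl_iff] at this
  have hnear : ∀ σ ∈ closedBall c r, ‖F σ / σ ^ d - L.eval (x * exp (-(σ - c) / N))‖ ≤ m / 3 := by
    intro σ hσ
    have hz := exp_neg_div_eq_mul_exp_neg_sub_div hN.ne' hs₀ j σ
    refine hz ▸ (hgood σ hσ).1 ?_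
    rw [hz, norm_mul, norm_exp_neg_div_ofReal]
    gcongr
    linarith [neg_abs_le (σ - c).re, abs_re_le_norm (σ - c), mem_closedBall_iff_norm.1 hσ]
  obtain ⟨σ, hσ, hσ0⟩ := exists_mem_closedBall_eq_zero_of_norm_sub_le hr
    ((differentiable_commensurateQuasiPoly A k N).differentiableOn.div
      (differentiable_pow d).differentiableOn fun σ hσ => pow_ne_zero d (hgood σ hσ).2)
    (by simpa using hLx) hnear fun σ hσ => by
      have := hfm (σ - c) (by rwa [mem_sphere_iff_norm, sub_zero, ← mem_sphere_iff_norm])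
      linarith
  exact ⟨σ, hσ, (div_eq_zero_iff.1 hσ0).resolve_right (pow_ne_zero _ (hgood σ hσ).2)⟩

theorem not_isBounded_setOf_re_lt_commensurateQuasiPoly_eq_zero
    (hA : ∀ i, (A i).natDegree ≤ d) (hN : 0 < N) (hL : asymptoticPoly A k d ≠ 0) {x : ℂ}
    (hx : 1 ≤ ‖x‖) (hLx : (asymptoticPoly A k d).IsRoot x) {ε : ℝ} (hε : 0 < ε) :
    ¬ IsBounded {s | s.re < ε ∧ commensurateQuasiPoly A k N s = 0} := by
  intro hbdd
  obtain ⟨s₀, hs₀re, hs₀⟩ := exists_re_nonpos_exp_neg_div_eq hN hx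
  obtain ⟨r, ⟨hr, hrε⟩, m, hm, hfm⟩ :=
    (show Differentiable ℂ fun w => (asymptoticPoly A k d).eval (x * exp (-w / N)) by
      fun_prop).exists_sphere_forall_le_norm
      ((asymptoticPoly A k d).exists_eval_mul_exp_ne_zero hL
        (norm_pos_iff.1 (zero_lt_one.trans_le hx)) hN.ne') 0 hε
  obtain ⟨R, hR⟩ := hbdd.subset_closedBall 0
  obtain ⟨j, hj, σ, hσ, hσ0⟩ := ((eventually_lt_two_pi_mul_natCast hN (R + ‖s₀‖ + r)).and
    (eventually_exists_commensurateQuasiPoly_eq_zero_mem_closedBall hA hN hs₀ hLx hr hm hfm)).exists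
  have hre : σ.re - s₀.re ≤ r := by
    simpa using (re_le_norm _).trans (mem_closedBall_iff_norm.1 hσ)
  have hσR := mem_closedBall_zero_iff.1 (hR ⟨by linarith, hσ0⟩)
  linarith [le_norm_of_mem_closedBall_add_mul_I hσ]

theorem finite_setOf_re_nonpos_commensurateQuasiPoly_eq_zero_iff
    (hA : ∀ i, (A i).natDegree ≤ d) (hN : 0 < N) (hL : asymptoticPoly A k d ≠ 0)
    (hk : ∀ i, k i ≤ (asymptoticPoly A k d).natDegree) {ε : ℝ} (hε : 0 < ε)
    (hstrip : {s | |s.re| < ε ∧ commensurateQuasiPoly A k N s = 0}.Finite) :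
    {s | s.re ≤ 0 ∧ commensurateQuasiPoly A k N s = 0}.Finite ↔
      ∀ x, (asymptoticPoly A k d).IsRoot x → ‖x‖ < 1 := by
  refine ⟨fun hfin x hx => ?_, finite_setOf_re_nonpos_commensurateQuasiPoly_eq_zero hA hN hL hk⟩
  by_contra! hx1
  refine not_isBounded_setOf_re_lt_commensurateQuasiPoly_eq_zero hA hN hL hx1 hx hε
    ((hfin.union hstrip).isBounded.subset fun s ⟨hre, hs⟩ => ?_)
  rcases le_or_gt s.re 0 with hnp | hpos
  · exact Or.inl ⟨hnp, hs⟩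
  · exact Or.inr ⟨abs_lt.2 ⟨by linarith, hre⟩, hs⟩

end CommensurateQuasiPoly

theorem mul_exp_eq_commensurateQuasiPoly {ι : Type*} [Fintype ι] {Q : ι → ℝ[X]} {n : ι → ℕ}
    {N : ℝ} (hN : N ≠ 0) {h : ι → ℝ} (hdelay : ∀ i, h i = n i / N) {q : ℂ → ℂ}
    (hq : ∀ s, q s = ∑ i, aeval s (Q i) * exp (-(h i : ℂ) * s)) {i₀ : ι} (hn : ∀ i, n i₀ ≤ n i)
    (s : ℂ) :
    q s * exp (h i₀ * s) =
      commensurateQuasiPoly (fun i => (Q i).map (algebraMap ℝ ℂ)) (fun i => n i - n i₀) N s := by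
  rw [hq, Finset.sum_mul, commensurateQuasiPoly]
  refine Finset.sum_congr rfl fun i _ => ?_
  rw [eval_map_algebraMap, mul_assoc, ← exp_nat_mul, ← exp_add, hdelay, hdelay]
  have hN' : (N : ℂ) ≠ 0 := ofReal_ne_zero.2 hN
  congr 2
  push_cast [Nat.cast_sub (hn i)]
  field_simp
  ring

theorem eval_asymptoticPoly_map_eq_mul {ι : Type*} [Fintype ι] (Q : ι → ℝ[X]) (k : ι → ℕ)
    (d : ℕ) {a : ℝ} (ha : a ≠ 0) (x : ℂ) :
    (asymptoticPoly (fun i => (Q i).map (algebraMap ℝ ℂ)) k d).eval x =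
      a * ∑ i, (((Q i).coeff d / a : ℝ) : ℂ) * x ^ k i := by
  rw [eval_asymptoticPoly, Finset.mul_sum]
  refine Finset.sum_congr rfl fun i _ => ?_
  rw [coeff_map, ofReal_div, ← mul_assoc, mul_div_cancel₀ _ (ofReal_ne_zero.2 ha)]
  rfl

theorem conjugate_finitely_many_unstable_roots_iff_general
    (v : ℕ)
    (Q : Fin (v + 1) → Polynomial ℝ) (hQne : ∀ i, Q i ≠ 0)
    (hQdeg : ∀ i, (Q i).natDegree ≤ (Q 0).natDegree)
    (hneutral : (Q (Fin.last v)).natDegree = (Q 0).natDegree)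
    (n : Fin (v + 1) → ℕ) (hnmono : StrictMono n)
    (N : ℕ) (hN : 0 < N)
    (h : Fin (v + 1) → ℝ) (hdelay : ∀ i, h i = (n i : ℝ) / N)
    (q : ℂ → ℂ)
    (hq : ∀ s : ℂ, q s = ∑ i, (Polynomial.aeval s (Q i)) * Complex.exp (-(h i : ℂ) * s))
    (qbar : ℂ → ℂ)
    (hqbar : ∀ s : ℂ, qbar s = -q (-s) * Complex.exp (-(h (Fin.last v) : ℂ) * s))
    (p : Fin (v + 1) → ℝ)
    (hp : ∀ i, p i = (Q i).coeff ((Q 0).natDegree) / (Q 0).leadingCoeff)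
    (P : ℂ → ℂ)
    (hP : ∀ x : ℂ, P x = ∑ i, (p i : ℂ) * x ^ (n i - n 0))
    (haxis : ∃ ε > (0 : ℝ), {s : ℂ | |s.re| < ε ∧ qbar s = 0}.Finite) :
    {s : ℂ | 0 ≤ s.re ∧ qbar s = 0}.Finite ↔
      (∀ x : ℂ, P x = 0 → ‖x‖ < 1) := by
  set A : Fin (v + 1) → ℂ[X] := fun i => (Q i).map (algebraMap ℝ ℂ)
  set k : Fin (v + 1) → ℕ := fun i => n i - n 0
  set L := asymptoticPoly A k (Q 0).natDegree
  have hNpos : (0 : ℝ) < N := Nat.cast_pos.2 hN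
  have hn₀ : ∀ i, n 0 ≤ n i := fun i => hnmono.monotone (Fin.zero_le i)
  have hk_inj : Function.Injective k := fun i j hij =>
    hnmono.injective ((tsub_left_inj (hn₀ i) (hn₀ j)).1 hij)
  have hA : ∀ i, (A i).natDegree ≤ (Q 0).natDegree := fun i => natDegree_map_le.trans (hQdeg i)
  have hlast : (A (Fin.last v)).coeff (Q 0).natDegree ≠ 0 := by
    rw [coeff_map, ← hneutral, coeff_natDegree]
    simpa using hQne (Fin.last v)
  have hk : ∀ i, k i ≤ L.natDegree := le_natDegree_asymptoticPoly hk_inj hlast fun i =>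
    tsub_le_tsub_right (hnmono.monotone (Fin.le_last i)) _
  have hP_root : ∀ x, P x = 0 ↔ L.IsRoot x := fun x => by
    have hlc := leadingCoeff_ne_zero.2 (hQne 0)
    rw [IsRoot, eval_asymptoticPoly_map_eq_mul Q k _ hlc, hP, mul_eq_zero, ofReal_eq_zero,
      or_iff_right hlc]
    simp only [hp, k]
  have hqF : ∀ s, q s * exp (h 0 * s) = commensurateQuasiPoly A k N s :=
    mul_exp_eq_commensurateQuasiPoly hNpos.ne' hdelay hq hn₀
  have hzeros : ∀ S : ℝ → Prop, {s | S s.re ∧ qbar s = 0} =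
      -{s | S (-s.re) ∧ commensurateQuasiPoly A k N s = 0} := fun S => by
    ext s
    simp [hqbar, ← hqF, exp_ne_zero]
  obtain ⟨ε, hε, hstrip⟩ := haxis
  simp only [hzeros (|·| < ε), hzeros (0 ≤ ·), Set.finite_neg, abs_neg, Left.nonneg_neg_iff,
    hP_root] at hstrip ⊢
  exact finite_setOf_re_nonpos_commensurateQuasiPoly_eq_zero_iff hA hNpos
    (asymptoticPoly_ne_zero hk_inj hlast) hk hε hstrip

/-- **Corollary (finitely many unstable roots of the conjugate quasi-polynomial).**
Let `q(s) = ∑_i q_i(s) e^{-h_i s}` be a neutral quasi-polynomial with commensurate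
delays `h_i = n_i / N` and `deg q_v = deg q_1` and let `q̄(s) = -q(-s) e^{-h_v s}` be
its conjugate quasi-polynomial.  If the root chains of `q̄` do not approach the
imaginary axis, then `q̄` has finitely many zeros in the closed right half-plane iff
every root `x` of the asymptotic polynomial `p` of `q` satisfies `|x| < 1`. -/
theorem conjugate_finitely_many_unstable_roots_iff
    (v : ℕ) (hv : 0 < v)
    (Q : Fin (v + 1) → Polynomial ℝ) (hQne : ∀ i, Q i ≠ 0)
    (hQdeg : ∀ i, (Q i).natDegree ≤ (Q 0).natDegree)
    (hneutral : (Q (Fin.last v)).natDegree = (Q 0).natDegree)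
    (n : Fin (v + 1) → ℕ) (hnmono : StrictMono n)
    (N : ℕ) (hN : 0 < N)
    (h : Fin (v + 1) → ℝ) (hdelay : ∀ i, h i = (n i : ℝ) / N)
    (q : ℂ → ℂ)
    (hq : ∀ s : ℂ, q s = ∑ i, (Polynomial.aeval s (Q i)) * Complex.exp (-(h i : ℂ) * s))
    (qbar : ℂ → ℂ)
    (hqbar : ∀ s : ℂ, qbar s = -q (-s) * Complex.exp (-(h (Fin.last v) : ℂ) * s))
    (p : Fin (v + 1) → ℝ)
    (hp : ∀ i, p i = (Q i).coeff ((Q 0).natDegree) / (Q 0).leadingCoeff)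
    (P : ℂ → ℂ)
    (hP : ∀ x : ℂ, P x = ∑ i, (p i : ℂ) * x ^ (n i - n 0))
    (haxis : ∃ ε > (0 : ℝ), {s : ℂ | |s.re| < ε ∧ qbar s = 0}.Finite) :
    {s : ℂ | 0 ≤ s.re ∧ qbar s = 0}.Finite ↔
      (∀ x : ℂ, P x = 0 → ‖x‖ < 1) :=
  conjugate_finitely_many_unstable_roots_iff_general v Q hQne hQdeg hneutral n hnmono N hN h hdelay
    q hq qbar hqbar p hp P hP haxis
end

section
/- Let q(s) = Σ_{i=1}^v q_i(s) e^{−h_i s} be a quasi-polynomial with commensurate delays h_i = n_i/N (n_i ∈ ℕ, N a positive integer), and let p be its asymptotic polynomial. Then for every σ₀ ∈ ℝ and every ε > 0 there exists ω* > 0 such that for all ω > ω*, writing s = σ₀ + jω, one has q_1(s) ≠ 0 and | q(s)·e^{h_1 s}/q_1(s) − p(e^{−s/N}) | = | Σ_{i=1}^v ( q_i(s)/q_1(s) − p_i ) e^{−(h_i − h_1)s} | < ε. -/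
/-!
Along the vertical line `s = σ₀ + jω` we have `|s| → ∞`. Dividing numerator and denominator by
`s ^ deg q_1` turns `q_i(s) / q_1(s)` into a quotient of polynomials in `1/s`, so it tends to `p_i`.
The factors `e^{-(h_i - h_1)s}` have constant modulus `e^{-(h_i - h_1)σ₀}` on the line, hence every
summand tends to `0`. The identity itself is algebra: `(e^{-s/N})^{n_i - n_1} = e^{-(h_i - h_1)s}`.
-/

open Complex Polynomial Filter Topology Bornology

namespace Polynomial

theorem tendsto_aeval_div_pow_cobounded {R 𝕜 : Type*} [CommSemiring R] [NormedField 𝕜]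
    [Algebra R 𝕜] {A : R[X]} {d : ℕ} (hA : A.natDegree ≤ d) :
    Tendsto (fun z : 𝕜 => aeval z A / z ^ d) (cobounded 𝕜) (𝓝 (algebraMap R 𝕜 (A.coeff d))) := by
  -- for `z ≠ 0`, `aeval z A / z ^ d` is the reflected polynomial `reflect d A` evaluated at `z⁻¹`
  have hrefl : Tendsto (fun z : 𝕜 => aeval z⁻¹ (reflect d A)) (cobounded 𝕜)
      (𝓝 (algebraMap R 𝕜 (A.coeff d))) := by
    have := ((Polynomial.continuous_aeval (reflect d A)).tendsto (0 : 𝕜)).comp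
      tendsto_inv₀_cobounded
    rwa [← coeff_zero_eq_aeval_zero', coeff_reflect, revAt_zero] at this
  refine hrefl.congr' ?_
  filter_upwards [eventually_ne_cobounded 0] with z hz
  have : Invertible z := invertibleOfNonzero hz
  rw [eq_div_iff (pow_ne_zero _ hz), aeval_def, aeval_def, ← invOf_eq_inv,
    eval₂_reflect_mul_pow _ z d A hA]

variable {K 𝕜 : Type*} [Field K] [NormedField 𝕜] [Algebra K 𝕜] {A B : K[X]}

theorem eventually_aeval_ne_zero_cobounded (hA : A ≠ 0) :
    ∀ᶠ z in cobounded 𝕜, aeval z A ≠ 0 := by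
  have hlead : algebraMap K 𝕜 A.leadingCoeff ≠ 0 := by simpa using hA
  filter_upwards [(tendsto_aeval_div_pow_cobounded le_rfl).eventually_ne hlead] with z hz h0
  simp [h0] at hz

theorem tendsto_aeval_div_aeval_cobounded (hA : A ≠ 0) (hB : B.natDegree ≤ A.natDegree) :
    Tendsto (fun z : 𝕜 => aeval z B / aeval z A) (cobounded 𝕜)
      (𝓝 (algebraMap K 𝕜 (B.coeff A.natDegree / A.leadingCoeff))) := by
  have hlead : algebraMap K 𝕜 A.leadingCoeff ≠ 0 := by simpa using hA
  rw [map_div₀]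
  refine ((tendsto_aeval_div_pow_cobounded hB).div
    (tendsto_aeval_div_pow_cobounded le_rfl) hlead).congr' ?_
  filter_upwards [eventually_ne_cobounded 0] with z hz
  exact div_div_div_cancel_right₀ (pow_ne_zero _ hz) _ _

end Polynomial

namespace Complex

theorem tendsto_ofReal_add_mul_I_atTop_cobounded (σ : ℝ) :
    Tendsto (fun ω : ℝ => (σ : ℂ) + ω * I) atTop (cobounded ℂ) := by
  rw [← tendsto_norm_atTop_iff_cobounded]
  refine tendsto_atTop_mono (fun ω => (le_abs_self ω).trans ?_) tendsto_id
  simpa using abs_im_le_norm ((σ : ℂ) + ω * I)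

theorem tendsto_mul_exp_ofReal_mul_add_mul_I {f : ℝ → ℂ} (hf : Tendsto f atTop (𝓝 0))
    (c σ : ℝ) : Tendsto (fun ω : ℝ => f ω * exp (c * ((σ : ℂ) + ω * I))) atTop (𝓝 0) := by
  rw [tendsto_zero_iff_norm_tendsto_zero]
  simpa [norm_exp] using hf.norm.mul_const (Real.exp (c * σ))

end Complex

theorem Filter.Eventually.exists_pos_forall_gt {P : ℝ → Prop} (hP : ∀ᶠ x in atTop, P x) :
    ∃ b > 0, ∀ x > b, P x := by
  obtain ⟨b, hb⟩ := hP.exists_forall_of_atTop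
  exact ⟨max b 1, by positivity, fun x hx => hb x (le_of_max_le_left hx.le)⟩

theorem sum_mul_exp_mul_div_sub_sum_eq {ι : Type*} [Fintype ι] (a p : ι → ℂ) (b s : ℂ)
    (n : ι → ℕ) (N : ℕ) (h : ι → ℝ) (hdelay : ∀ i, h i = n i / N) (i₀ : ι)
    (hn : ∀ i, n i₀ ≤ n i) :
    (∑ i, a i * exp (-(h i : ℂ) * s)) * exp (h i₀ * s) / b
        - ∑ i, p i * exp (-s / N) ^ (n i - n i₀)
      = ∑ i, (a i / b - p i) * exp (-((h i : ℂ) - h i₀) * s) := by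
  rw [Finset.sum_mul, Finset.sum_div, ← Finset.sum_sub_distrib]
  refine Finset.sum_congr rfl fun i _ => ?_
  have hpow : exp (-s / N) ^ (n i - n i₀) = exp (-((h i : ℂ) - h i₀) * s) := by
    rw [← exp_nat_mul, hdelay, hdelay]
    push_cast [Nat.cast_sub (hn i)]
    ring_nf
  rw [hpow, mul_assoc, ← exp_add]
  ring_nf

theorem quasipolynomial_asymptotic_estimate_general
    (v : ℕ)
    (Q : Fin (v + 1) → Polynomial ℝ) (hQne : ∀ i, Q i ≠ 0)
    (hQdeg : ∀ i, (Q i).natDegree ≤ (Q 0).natDegree)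
    (n : Fin (v + 1) → ℕ) (hnmono : StrictMono n)
    (N : ℕ)
    (h : Fin (v + 1) → ℝ) (hdelay : ∀ i, h i = (n i : ℝ) / N)
    (q : ℂ → ℂ)
    (hq : ∀ s : ℂ, q s = ∑ i, (Polynomial.aeval s (Q i)) * Complex.exp (-(h i : ℂ) * s))
    (p : Fin (v + 1) → ℝ)
    (hp : ∀ i, p i = (Q i).coeff ((Q 0).natDegree) / (Q 0).leadingCoeff)
    (P : ℂ → ℂ)
    (hP : ∀ x : ℂ, P x = ∑ i, (p i : ℂ) * x ^ (n i - n 0)) :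
    ∀ σ₀ : ℝ, ∀ ε > (0 : ℝ), ∃ ωst > (0 : ℝ), ∀ ω > ωst,
      Polynomial.aeval ((σ₀ : ℂ) + ω * Complex.I) (Q 0) ≠ 0 ∧
      (q ((σ₀ : ℂ) + ω * Complex.I) * Complex.exp ((h 0 : ℂ) * ((σ₀ : ℂ) + ω * Complex.I))
          / Polynomial.aeval ((σ₀ : ℂ) + ω * Complex.I) (Q 0)
        - P (Complex.exp (-((σ₀ : ℂ) + ω * Complex.I) / N))
        = ∑ i, (Polynomial.aeval ((σ₀ : ℂ) + ω * Complex.I) (Q i)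
                  / Polynomial.aeval ((σ₀ : ℂ) + ω * Complex.I) (Q 0) - (p i : ℂ))
              * Complex.exp (-((h i : ℂ) - (h 0 : ℂ)) * ((σ₀ : ℂ) + ω * Complex.I))) ∧
      ‖(q ((σ₀ : ℂ) + ω * Complex.I) * Complex.exp ((h 0 : ℂ) * ((σ₀ : ℂ) + ω * Complex.I))
            / Polynomial.aeval ((σ₀ : ℂ) + ω * Complex.I) (Q 0)
          - P (Complex.exp (-((σ₀ : ℂ) + ω * Complex.I) / N)))‖ < ε := by
  intro σ₀ ε hε
  have hline := tendsto_ofReal_add_mul_I_atTop_cobounded σ₀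
  have hidentity : ∀ s : ℂ, q s * exp (h 0 * s) / aeval s (Q 0) - P (exp (-s / N))
      = ∑ i, (aeval s (Q i) / aeval s (Q 0) - p i) * exp (-((h i : ℂ) - h 0) * s) := fun s => by
    rw [hq, hP]
    exact sum_mul_exp_mul_div_sub_sum_eq _ _ _ _ n N h hdelay 0
      fun i => hnmono.monotone (Fin.zero_le i)
  have hterm (i : Fin (v + 1)) : Tendsto (fun ω : ℝ =>
      (aeval ((σ₀ : ℂ) + ω * I) (Q i) / aeval ((σ₀ : ℂ) + ω * I) (Q 0) - p i)
        * exp (-((h i : ℂ) - h 0) * ((σ₀ : ℂ) + ω * I))) atTop (𝓝 0) := by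
    have hratio := ((tendsto_aeval_div_aeval_cobounded (hQne 0) (hQdeg i)).comp hline).sub_const
      (p i : ℂ)
    rw [← hp, Complex.coe_algebraMap, sub_self] at hratio
    simpa using tendsto_mul_exp_ofReal_mul_add_mul_I hratio (-(h i - h 0)) σ₀
  have hsmall : ∀ᶠ ω : ℝ in atTop, ‖∑ i,
      (aeval ((σ₀ : ℂ) + ω * I) (Q i) / aeval ((σ₀ : ℂ) + ω * I) (Q 0) - p i)
        * exp (-((h i : ℂ) - h 0) * ((σ₀ : ℂ) + ω * I))‖ < ε := by
    have hsum := (tendsto_finsetSum Finset.univ fun i _ => hterm i).norm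
    rw [Finset.sum_const_zero, norm_zero] at hsum
    exact hsum.eventually_lt_const hε
  obtain ⟨ωst, hωst, hgood⟩ :=
    ((hline.eventually (eventually_aeval_ne_zero_cobounded (hQne 0))).and hsmall).exists_pos_forall_gt
  refine ⟨ωst, hωst, fun ω hω => ⟨(hgood ω hω).1, hidentity _, ?_⟩⟩
  rw [hidentity]
  exact (hgood ω hω).2

/-- **Asymptotic approximation of a quasi-polynomial by its asymptotic polynomial.**
For every `σ₀ ∈ ℝ` and `ε > 0` there is `ω* > 0` such that for all `ω > ω*`, with
`s = σ₀ + jω`, one has `q_1(s) ≠ 0` and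
`|q(s) e^{h_1 s} / q_1(s) - p(e^{-s/N})|
  = |∑_i (q_i(s)/q_1(s) - p_i) e^{-(h_i - h_1) s}| < ε`. -/
theorem quasipolynomial_asymptotic_estimate
    (v : ℕ)
    (Q : Fin (v + 1) → Polynomial ℝ) (hQne : ∀ i, Q i ≠ 0)
    (hQdeg : ∀ i, (Q i).natDegree ≤ (Q 0).natDegree)
    (n : Fin (v + 1) → ℕ) (hnmono : StrictMono n)
    (N : ℕ) (hN : 0 < N)
    (h : Fin (v + 1) → ℝ) (hdelay : ∀ i, h i = (n i : ℝ) / N)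
    (q : ℂ → ℂ)
    (hq : ∀ s : ℂ, q s = ∑ i, (Polynomial.aeval s (Q i)) * Complex.exp (-(h i : ℂ) * s))
    (p : Fin (v + 1) → ℝ)
    (hp : ∀ i, p i = (Q i).coeff ((Q 0).natDegree) / (Q 0).leadingCoeff)
    (P : ℂ → ℂ)
    (hP : ∀ x : ℂ, P x = ∑ i, (p i : ℂ) * x ^ (n i - n 0)) :
    ∀ σ₀ : ℝ, ∀ ε > (0 : ℝ), ∃ ωst > (0 : ℝ), ∀ ω > ωst,
      Polynomial.aeval ((σ₀ : ℂ) + ω * Complex.I) (Q 0) ≠ 0 ∧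
      (q ((σ₀ : ℂ) + ω * Complex.I) * Complex.exp ((h 0 : ℂ) * ((σ₀ : ℂ) + ω * Complex.I))
          / Polynomial.aeval ((σ₀ : ℂ) + ω * Complex.I) (Q 0)
        - P (Complex.exp (-((σ₀ : ℂ) + ω * Complex.I) / N))
        = ∑ i, (Polynomial.aeval ((σ₀ : ℂ) + ω * Complex.I) (Q i)
                  / Polynomial.aeval ((σ₀ : ℂ) + ω * Complex.I) (Q 0) - (p i : ℂ))
              * Complex.exp (-((h i : ℂ) - (h 0 : ℂ)) * ((σ₀ : ℂ) + ω * Complex.I))) ∧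
      ‖(q ((σ₀ : ℂ) + ω * Complex.I) * Complex.exp ((h 0 : ℂ) * ((σ₀ : ℂ) + ω * Complex.I))
            / Polynomial.aeval ((σ₀ : ℂ) + ω * Complex.I) (Q 0)
          - P (Complex.exp (-((σ₀ : ℂ) + ω * Complex.I) / N)))‖ < ε :=
  quasipolynomial_asymptotic_estimate_general v Q hQne hQdeg n hnmono N h hdelay q hq p hp P hP
end

section
/- Let z_1, …, z_m ∈ ℂ be distinct, let 0 ≤ h_1 < h_2 < … < h_v be real numbers, and let c_{ik} ∈ ℂ for i = 1..v, k = 1..m. Define f : ℝ → ℂ by f(t) = Σ_{k=1}^m Σ_{i : h_i ≤ t} c_{ik} e^{z_k (t − h_i)}. Suppose that for every k, Σ_{i=1}^v c_{ik} e^{−h_i z_k} = 0. Then f(t) = 0 for all t > h_v, and for every s ∉ {z_1, …, z_m}, Σ_{i=1}^v Σ_{k=1}^m c_{ik} e^{−h_i s}/(s − z_k) = ∫_0^{h_v} f(t) e^{−s t} dt; that is, F(s) = Σ_i F_i(s) e^{−h_i s} is the Laplace transform of a finite impulse response (FIR) supported on [0, h_v]. -/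
open Complex BigOperators intervalIntegral

private lemma fir_aux_integrable {a b r : ℝ} {G : ℝ → ℂ} (hG : Continuous G) :
    IntervalIntegrable (fun t => if r ≤ t then G t else 0) MeasureTheory.volume a b := by
  have he : (fun t => if r ≤ t then G t else 0) = Set.indicator (Set.Ici r) G := by
    funext t; simp [Set.indicator_apply, Set.mem_Ici]
  rw [he, intervalIntegrable_iff]
  exact (intervalIntegrable_iff.mp (hG.intervalIntegrable a b)).indicator measurableSet_Ici

/-- **FIR (finite impulse response) structure.**
Let `z_1, …, z_m` be distinct, `0 ≤ h_1 < … < h_v`, `c_{ik} ∈ ℂ`, and define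
`f(t) = ∑_k ∑_{i : h_i ≤ t} c_{ik} e^{z_k (t - h_i)}`.  If `∑_i c_{ik} e^{-h_i z_k} = 0`
for every `k`, then `f(t) = 0` for all `t > h_v`, and for every `s ∉ {z_1, …, z_m}`,
`∑_i ∑_k c_{ik} e^{-h_i s}/(s - z_k) = ∫_0^{h_v} f(t) e^{-s t} dt`;
i.e. `F` is the Laplace transform of an FIR supported on `[0, h_v]`. -/
theorem fir_structure_of_vanishing_residues
    (m v : ℕ) (z : Fin m → ℂ) (hz : Function.Injective z)
    (h : Fin (v + 1) → ℝ) (hh0 : 0 ≤ h 0) (hmono : StrictMono h)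
    (c : Fin (v + 1) → Fin m → ℂ)
    (f : ℝ → ℂ)
    (hf : ∀ t : ℝ, f t = ∑ k, ∑ i,
      if h i ≤ t then c i k * Complex.exp (z k * ((t : ℂ) - (h i : ℂ))) else 0)
    (hres : ∀ k, ∑ i, c i k * Complex.exp (-(h i : ℂ) * z k) = 0) :
    (∀ t : ℝ, h (Fin.last v) < t → f t = 0) ∧
    (∀ s : ℂ, s ∉ Set.range z →
      ∑ i, ∑ k, c i k * Complex.exp (-(h i : ℂ) * s) / (s - z k)
        = ∫ t in (0 : ℝ)..(h (Fin.last v)), f t * Complex.exp (-s * (t : ℂ))) := by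
  have hle : ∀ i : Fin (v + 1), h i ≤ h (Fin.last v) := fun i =>
    hmono.monotone (Fin.le_last i)
  have hpos : ∀ i : Fin (v + 1), 0 ≤ h i := fun i => hh0.trans (hmono.monotone (Fin.zero_le i))
  constructor
  · intro t ht
    rw [hf t]
    apply Finset.sum_eq_zero; intro k _
    have h1 : ∀ i : Fin (v + 1), h i ≤ t := fun i => ((hle i).trans_lt ht).le
    rw [Finset.sum_congr rfl (fun i _ => if_pos (h1 i))]
    have key : ∀ i : Fin (v + 1),
        c i k * Complex.exp (z k * ((t : ℂ) - (h i : ℂ)))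
          = (c i k * Complex.exp (-(h i : ℂ) * z k)) * Complex.exp (z k * (t : ℂ)) := by
      intro i
      rw [mul_assoc, ← Complex.exp_add]
      congr 2
      ring
    rw [Finset.sum_congr rfl (fun i _ => key i), ← Finset.sum_mul, hres k, zero_mul]
  · intro s hs
    have hsz : ∀ k, z k - s ≠ 0 := by
      intro k hk
      exact hs ⟨k, by linear_combination hk⟩
    set H := h (Fin.last v) with hH
    have hint : ∀ t : ℝ, f t * Complex.exp (-s * (t : ℂ))
        = ∑ k, ∑ i, (if h i ≤ t then
            c i k * Complex.exp (z k * ((t : ℂ) - (h i : ℂ))) * Complex.exp (-s * (t : ℂ)) else 0) := by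
      intro t
      rw [hf t, Finset.sum_mul]
      refine Finset.sum_congr rfl fun k _ => ?_
      rw [Finset.sum_mul]
      refine Finset.sum_congr rfl fun i _ => ?_
      split <;> simp
    have hG : ∀ i k, Continuous (fun t : ℝ =>
        c i k * Complex.exp (z k * ((t : ℂ) - (h i : ℂ))) * Complex.exp (-s * (t : ℂ))) := by
      intro i k
      fun_prop
    have hintg : ∀ (i : Fin (v+1)) (k : Fin m) (a b : ℝ), IntervalIntegrable
        (fun t : ℝ => if h i ≤ t then
          c i k * Complex.exp (z k * ((t : ℂ) - (h i : ℂ))) * Complex.exp (-s * (t : ℂ)) else 0)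
        MeasureTheory.volume a b := fun i k a b => fir_aux_integrable (hG i k)
    rw [intervalIntegral.integral_congr (fun t _ => hint t)]
    have step1 : (∫ t in (0:ℝ)..H, ∑ k, ∑ i, (if h i ≤ t then
            c i k * Complex.exp (z k * ((t : ℂ) - (h i : ℂ))) * Complex.exp (-s * (t : ℂ)) else 0))
        = ∑ k, ∑ i, ∫ t in (0:ℝ)..H, (if h i ≤ t then
            c i k * Complex.exp (z k * ((t : ℂ) - (h i : ℂ))) * Complex.exp (-s * (t : ℂ)) else 0) := by
      have A := intervalIntegral.integral_finset_sum (s := Finset.univ) (a := (0:ℝ)) (b := H)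
        (μ := MeasureTheory.volume)
        (f := fun (k : Fin m) (t : ℝ) => ∑ i, (if h i ≤ t then
          c i k * Complex.exp (z k * ((t : ℂ) - (h i : ℂ))) * Complex.exp (-s * (t : ℂ)) else 0))
        (fun k _ => by
          have C := IntervalIntegrable.sum (μ := MeasureTheory.volume) (a := (0:ℝ)) (b := H)
            (f := fun (i : Fin (v+1)) (t : ℝ) => (if h i ≤ t then
              c i k * Complex.exp (z k * ((t : ℂ) - (h i : ℂ))) * Complex.exp (-s * (t : ℂ)) else 0))
            Finset.univ (fun i _ => hintg i k 0 H)
          rw [Finset.sum_fn] at C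
          exact C)
      have B := fun (k : Fin m) => intervalIntegral.integral_finset_sum (s := Finset.univ) (a := (0:ℝ)) (b := H)
        (μ := MeasureTheory.volume)
        (f := fun (i : Fin (v+1)) (t : ℝ) => (if h i ≤ t then
          c i k * Complex.exp (z k * ((t : ℂ) - (h i : ℂ))) * Complex.exp (-s * (t : ℂ)) else 0))
        (fun i _ => hintg i k 0 H)
      exact A.trans (Finset.sum_congr rfl fun k _ => B k)
    rw [step1]
    -- compute each single integral
    have single : ∀ (i : Fin (v+1)) (k : Fin m),
        (∫ t in (0:ℝ)..H, (if h i ≤ t then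
            c i k * Complex.exp (z k * ((t : ℂ) - (h i : ℂ))) * Complex.exp (-s * (t : ℂ)) else 0))
        = (c i k * Complex.exp (-(h i : ℂ) * z k)) *
            ((Complex.exp ((z k - s) * (H : ℂ)) - Complex.exp ((z k - s) * ((h i : ℝ) : ℂ))) / (z k - s)) := by
      intro i k
      rw [← intervalIntegral.integral_add_adjacent_intervals (hintg i k 0 (h i)) (hintg i k (h i) H)]
      have hz1 : (∫ t in (0:ℝ)..(h i), (if h i ≤ t then
          c i k * Complex.exp (z k * ((t : ℂ) - (h i : ℂ))) * Complex.exp (-s * (t : ℂ)) else 0)) = 0 := by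
        have hae : ∀ᵐ x : ℝ, x ≠ h i := by
          refine MeasureTheory.ae_iff.mpr ?_
          simpa using Real.volume_singleton
        rw [intervalIntegral.integral_congr_ae (g := fun _ => (0 : ℂ)) ?_]
        · simp
        · filter_upwards [hae] with x hx hmem
          rw [Set.uIoc_of_le (hpos i)] at hmem
          rw [if_neg (fun hc => hx (le_antisymm hmem.2 hc))]
      rw [hz1, zero_add]
      have heq : Set.EqOn
          (fun t : ℝ => if h i ≤ t then
            c i k * Complex.exp (z k * ((t : ℂ) - (h i : ℂ))) * Complex.exp (-s * (t : ℂ)) else 0)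
          (fun t : ℝ => (c i k * Complex.exp (-(h i : ℂ) * z k)) * Complex.exp ((z k - s) * (t : ℂ)))
          (Set.uIcc (h i) H) := by
        intro t htmem
        rw [Set.uIcc_of_le (hle i)] at htmem
        simp only [if_pos htmem.1]
        rw [mul_assoc, ← Complex.exp_add, mul_assoc, ← Complex.exp_add]
        congr 2
        ring
      rw [intervalIntegral.integral_congr heq, intervalIntegral.integral_const_mul,
        integral_exp_mul_complex (hsz k)]
    rw [Finset.sum_congr rfl (fun k _ => Finset.sum_congr rfl (fun i _ => single i k))]
    rw [Finset.sum_comm]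
    refine Finset.sum_congr rfl fun k _ => ?_
    have expand : ∀ i : Fin (v+1),
        (c i k * Complex.exp (-(h i : ℂ) * z k)) *
          ((Complex.exp ((z k - s) * (H : ℂ)) - Complex.exp ((z k - s) * ((h i : ℝ) : ℂ))) / (z k - s))
        = (c i k * Complex.exp (-(h i : ℂ) * z k)) *
            (Complex.exp ((z k - s) * (H : ℂ)) / (z k - s))
          + c i k * Complex.exp (-(h i : ℂ) * s) / (s - z k) := by
      intro i
      have e1 : Complex.exp (-(h i : ℂ) * z k) * Complex.exp ((z k - s) * ((h i : ℝ) : ℂ))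
          = Complex.exp (-(h i : ℂ) * s) := by
        rw [← Complex.exp_add]; congr 1; ring
      rw [show s - z k = -(z k - s) by ring, div_neg]
      linear_combination (-(c i k) / (z k - s)) * e1
    rw [Finset.sum_congr rfl (fun i _ => expand i), Finset.sum_add_distrib,
      ← Finset.sum_mul, hres k, zero_mul, zero_add]
end

section
/- (FIR structure from unstable pole-zero cancellations.) Let z_1, …, z_m ∈ ℂ be distinct points with Re z_k ≥ 0; let n_0 and d_0 be polynomials over ℂ with n_0(z_k) = 0, n_0′(z_k) ≠ 0, and d_0(z_k) ≠ 0 for each k (so G_0 = n_0/d_0 has a simple zero at each z_k); let G_1, …, G_v : ℂ → ℂ be entire functions, let 0 ≤ h_1 < … < h_v be real numbers, and set G(s) = Σ_{i=1}^v G_i(s) e^{−h_i s}. Assume G(z_k) = 0 for every k (the z_k are common right-half-plane zeros of G and G_0). Define c_{ik} = G_i(z_k)·d_0(z_k)/n_0′(z_k), F(s) = Σ_{i,k} c_{ik} e^{−h_i s}/(s − z_k), and f(t) = Σ_{k=1}^m Σ_{i : h_i ≤ t} c_{ik} e^{z_k(t − h_i)}. Then: (i) Σ_{i=1}^v c_{ik}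 e^{−h_i z_k} = 0 for every k; (ii) f(t) = 0 for all t > h_v; (iii) for every s ∉ {z_1, …, z_m}, F(s) = ∫_0^{h_v} f(t) e^{−s t} dt, so F is an FIR filter with support [0, h_v]; (iv) the function H(s) = G(s)·d_0(s)/n_0(s) − F(s) extends analytically to a neighborhood of each z_k, i.e., H has no poles among the z_k. -/
open Complex Polynomial BigOperators intervalIntegral

lemma dslope_differentiable {f : ℂ → ℂ} (hf : Differentiable ℂ f) (a : ℂ) :
    Differentiable ℂ (dslope f a) := by
  intro w
  rcases eq_or_ne w a with rfl | hw
  · obtain ⟨p, hp⟩ := hf.analyticAt w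
    exact hp.has_fpower_series_dslope_fslope.analyticAt.differentiableAt
  · have hev : ∀ᶠ y in nhds w, dslope f a y = (f y - f a) / (y - a) := by
      filter_upwards [isOpen_ne.mem_nhds hw] with y (hy : y ≠ a)
      rw [dslope_of_ne _ hy, slope_def_field]
    refine DifferentiableAt.congr_of_eventuallyEq ?_ hev
    exact ((hf w).sub_const _).div (differentiableAt_id.sub_const a) (sub_ne_zero.mpr hw)


/-- **Proposition (FIR structure from unstable pole-zero cancellations).**
Let `z_1, …, z_m` be distinct points in the closed right half-plane, simple zeros of the
rational function `G₀ = n₀/d₀` (so `n₀(z_k) = 0`, `n₀'(z_k) ≠ 0`, `d₀(z_k) ≠ 0`), and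
let `G(s) = ∑_i G_i(s) e^{-h_i s}` be a SISO time-delay system (the `G_i` entire) with
`G(z_k) = 0` for every `k`.  With residues `c_{ik} = G_i(z_k) d₀(z_k)/n₀'(z_k)`,
`F(s) = ∑_{i,k} c_{ik} e^{-h_i s}/(s - z_k)` and
`f(t) = ∑_k ∑_{i : h_i ≤ t} c_{ik} e^{z_k (t - h_i)}`:
(i) the total residues vanish, `∑_i c_{ik} e^{-h_i z_k} = 0`; (ii) `f(t) = 0` for
`t > h_v`; (iii) `F(s) = ∫_0^{h_v} f(t) e^{-st} dt` off `{z_k}`, so `F` is an FIR filter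
with support `[0, h_v]`; (iv) `H = G·d₀/n₀ - F` extends analytically near each `z_k`. -/
theorem fir_structure_of_pole_zero_cancellation
    (m v : ℕ) (z : Fin m → ℂ) (hz : Function.Injective z)
    (hzre : ∀ k, 0 ≤ (z k).re)
    (n0 d0 : Polynomial ℂ)
    (hn0 : ∀ k, n0.eval (z k) = 0)
    (hn0' : ∀ k, n0.derivative.eval (z k) ≠ 0)
    (hd0 : ∀ k, d0.eval (z k) ≠ 0)
    (Gi : Fin (v + 1) → ℂ → ℂ) (hGi : ∀ i, Differentiable ℂ (Gi i))
    (h : Fin (v + 1) → ℝ) (hh0 : 0 ≤ h 0) (hmono : StrictMono h)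
    (G : ℂ → ℂ)
    (hG : ∀ s : ℂ, G s = ∑ i, Gi i s * Complex.exp (-(h i : ℂ) * s))
    (hGz : ∀ k, G (z k) = 0)
    (c : Fin (v + 1) → Fin m → ℂ)
    (hc : ∀ i k, c i k = Gi i (z k) * d0.eval (z k) / n0.derivative.eval (z k))
    (F : ℂ → ℂ)
    (hF : ∀ s : ℂ, F s = ∑ i, ∑ k, c i k * Complex.exp (-(h i : ℂ) * s) / (s - z k))
    (f : ℝ → ℂ)
    (hf : ∀ t : ℝ, f t = ∑ k, ∑ i,
      if h i ≤ t then c i k * Complex.exp (z k * ((t : ℂ) - (h i : ℂ))) else 0) :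
    (∀ k, ∑ i, c i k * Complex.exp (-(h i : ℂ) * z k) = 0) ∧
    (∀ t : ℝ, h (Fin.last v) < t → f t = 0) ∧
    (∀ s : ℂ, s ∉ Set.range z →
      F s = ∫ t in (0 : ℝ)..(h (Fin.last v)), f t * Complex.exp (-s * (t : ℂ))) ∧
    (∀ k, ∃ U : Set ℂ, IsOpen U ∧ z k ∈ U ∧ ∃ Hext : ℂ → ℂ,
      DifferentiableOn ℂ Hext U ∧
      ∀ s ∈ U, s ≠ z k → Hext s = G s * d0.eval s / n0.eval s - F s) := by
  have part1 : ∀ k, ∑ i, c i k * Complex.exp (-(h i : ℂ) * z k) = 0 := by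
    intro k
    have hs : ∑ i, Gi i (z k) * Complex.exp (-(h i : ℂ) * z k) = 0 := by
      rw [← hG]; exact hGz k
    have : ∑ i, c i k * Complex.exp (-(h i:ℂ) * z k)
        = (∑ i, Gi i (z k) * Complex.exp (-(h i:ℂ) * z k))
            * (d0.eval (z k) / n0.derivative.eval (z k)) := by
      rw [Finset.sum_mul]
      exact Finset.sum_congr rfl fun i _ => by rw [hc]; ring
    rw [this, hs, zero_mul]
  have part2 : ∀ t : ℝ, h (Fin.last v) < t → f t = 0 := by
    intro t ht
    rw [hf]
    refine Finset.sum_eq_zero fun k _ => ?_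
    have hall : ∀ i, h i ≤ t := fun i => (hmono.monotone (Fin.le_last i)).trans ht.le
    calc ∑ i, (if h i ≤ t then c i k * Complex.exp (z k * ((t:ℂ) - (h i:ℂ))) else 0)
        = Complex.exp (z k * (t:ℂ)) * ∑ i, c i k * Complex.exp (-(h i:ℂ) * z k) := by
          rw [Finset.mul_sum]
          refine Finset.sum_congr rfl fun i _ => ?_
          rw [if_pos (hall i),
            show z k * ((t:ℂ) - (h i:ℂ)) = -(h i:ℂ) * z k + z k * (t:ℂ) by ring,
            Complex.exp_add]
          ring
      _ = 0 := by rw [part1 k, mul_zero]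
  have part3 : ∀ s : ℂ, s ∉ Set.range z →
      F s = ∫ t in (0 : ℝ)..(h (Fin.last v)), f t * Complex.exp (-s * (t : ℂ)) := by
    intro s hs
    set T := h (Fin.last v) with hTdef
    have hhi_le : ∀ i, h i ≤ T := fun i => hmono.monotone (Fin.le_last i)
    have hhi_0 : ∀ i, (0:ℝ) ≤ h i := fun i => hh0.trans (hmono.monotone (Fin.zero_le i))
    have hzs : ∀ k, z k - s ≠ 0 := fun k => sub_ne_zero.mpr fun e => hs ⟨k, e⟩
    set g : Fin (v+1) → Fin m → ℝ → ℂ := fun i k t =>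
      c i k * Complex.exp (z k * ((t:ℂ) - (h i:ℂ))) * Complex.exp (-s * (t:ℂ)) with hgdef
    have hgc : ∀ i k, Continuous (g i k) := by
      intro i k
      apply Continuous.mul
      · exact continuous_const.mul (Complex.continuous_exp.comp (by fun_prop))
      · exact Complex.continuous_exp.comp (by fun_prop)
    have hφint : ∀ (i : Fin (v+1)) (k : Fin m) (a b : ℝ),
        IntervalIntegrable (Set.indicator (Set.Ici (h i)) (g i k)) MeasureTheory.volume a b :=
      fun i k a b => ⟨(((hgc i k).intervalIntegrable a b).1).indicator measurableSet_Ici,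
        (((hgc i k).intervalIntegrable a b).2).indicator measurableSet_Ici⟩
    have part1' : ∀ k, ∑ i, c i k * Complex.exp (-(z k) * (h i:ℂ)) = 0 := by
      intro k
      rw [← part1 k]
      exact Finset.sum_congr rfl fun i _ => by rw [neg_mul, neg_mul, mul_comm (z k)]
    have key : ∀ k, ∑ i, c i k * Complex.exp (-(z k) * (h i:ℂ)) *
        ((Complex.exp ((z k - s)*(T:ℂ)) - Complex.exp ((z k - s)*(h i:ℂ)))/(z k - s))
        = ∑ i, c i k * Complex.exp (-(h i:ℂ) * s)/(s - z k) := by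
      intro k
      calc ∑ i, c i k * Complex.exp (-(z k) * (h i:ℂ)) *
          ((Complex.exp ((z k - s)*(T:ℂ)) - Complex.exp ((z k - s)*(h i:ℂ)))/(z k - s))
          = Complex.exp ((z k - s)*(T:ℂ))/(z k - s)
              * (∑ i, c i k * Complex.exp (-(z k) * (h i:ℂ)))
            - ∑ i, c i k * Complex.exp (-(h i:ℂ) * s) /(z k - s) := by
            rw [Finset.mul_sum, ← Finset.sum_sub_distrib]
            refine Finset.sum_congr rfl fun i _ => ?_
            have e1 : Complex.exp (-(z k) * (h i:ℂ)) * Complex.exp ((z k - s)*(h i:ℂ))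
                = Complex.exp (-(h i:ℂ)*s) := by
              rw [← Complex.exp_add]; congr 1; ring
            simp only [div_eq_mul_inv]
            linear_combination (-(c i k * (z k - s)⁻¹)) * e1
        _ = ∑ i, c i k * Complex.exp (-(h i:ℂ) * s)/(s - z k) := by
            rw [part1' k, mul_zero, zero_sub, ← Finset.sum_neg_distrib]
            exact Finset.sum_congr rfl fun i _ => by rw [← div_neg, neg_sub]
    have hval : ∀ (i : Fin (v+1)) (k : Fin m), (∫ t in (h i)..T, g i k t)
        = c i k * Complex.exp (-(z k) * (h i:ℂ)) *
          ((Complex.exp ((z k - s)*(T:ℂ)) - Complex.exp ((z k - s)*(h i:ℂ)))/(z k - s)) := by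
      intro i k
      have hptw : ∀ t : ℝ, g i k t
          = (c i k * Complex.exp (-(z k) * (h i:ℂ))) * Complex.exp ((z k - s) * (t:ℂ)) := by
        intro t
        rw [hgdef]
        simp only
        rw [mul_assoc, ← Complex.exp_add, mul_assoc, ← Complex.exp_add]
        congr 2
        ring
      rw [intervalIntegral.integral_congr (g := fun t : ℝ =>
          (c i k * Complex.exp (-(z k) * (h i:ℂ))) * Complex.exp ((z k - s) * (t:ℂ)))
          (fun t _ => hptw t),
        intervalIntegral.integral_const_mul, integral_exp_mul_complex (hzs k)]
    have hsplit : ∀ (i : Fin (v+1)) (k : Fin m),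
        (∫ t in (0:ℝ)..T, Set.indicator (Set.Ici (h i)) (g i k) t) = ∫ t in (h i)..T, g i k t := by
      intro i k
      rw [← intervalIntegral.integral_add_adjacent_intervals (hφint i k 0 (h i)) (hφint i k (h i) T)]
      have h1 : (∫ t in (0:ℝ)..(h i), Set.indicator (Set.Ici (h i)) (g i k) t) = 0 := by
        rw [intervalIntegral.integral_of_le (hhi_0 i),
          MeasureTheory.integral_indicator measurableSet_Ici,
          MeasureTheory.Measure.restrict_restrict measurableSet_Ici]
        have hnull : MeasureTheory.volume (Set.Ici (h i) ∩ Set.Ioc 0 (h i)) = 0 := by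
          refine MeasureTheory.measure_mono_null (fun t ht => ?_) (MeasureTheory.measure_singleton (h i))
          exact le_antisymm ht.2.2 ht.1
        rw [MeasureTheory.Measure.restrict_eq_zero.mpr hnull, MeasureTheory.integral_zero_measure]
      have h2 : (∫ t in (h i)..T, Set.indicator (Set.Ici (h i)) (g i k) t)
          = ∫ t in (h i)..T, g i k t := by
        refine intervalIntegral.integral_congr fun t ht => ?_
        rw [Set.uIcc_of_le (hhi_le i)] at ht
        simp [Set.indicator_apply, Set.mem_Ici, ht.1]
      rw [h1, h2, zero_add]
    have hintegrand : ∀ t : ℝ, f t * Complex.exp (-s * (t:ℂ))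
        = ∑ k, ∑ i, Set.indicator (Set.Ici (h i)) (g i k) t := by
      intro t
      rw [hf, Finset.sum_mul]
      refine Finset.sum_congr rfl fun k _ => ?_
      rw [Finset.sum_mul]
      refine Finset.sum_congr rfl fun i _ => ?_
      by_cases hit : h i ≤ t
      · simp [Set.indicator_apply, Set.mem_Ici, hit, hgdef]
      · simp [Set.indicator_apply, Set.mem_Ici, hit]
    calc F s = ∑ k, ∑ i, c i k * Complex.exp (-(h i:ℂ) * s)/(s - z k) := by
          rw [hF s]; exact Finset.sum_comm
      _ = ∑ k, ∑ i, c i k * Complex.exp (-(z k) * (h i:ℂ)) *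
          ((Complex.exp ((z k - s)*(T:ℂ)) - Complex.exp ((z k - s)*(h i:ℂ)))/(z k - s)) := by
          exact Finset.sum_congr rfl fun k _ => (key k).symm
      _ = ∑ k, ∑ i, ∫ t in (0:ℝ)..T, Set.indicator (Set.Ici (h i)) (g i k) t := by
          refine Finset.sum_congr rfl fun k _ => Finset.sum_congr rfl fun i _ => ?_
          rw [hsplit i k, hval i k]
      _ = ∑ k, ∫ t in (0:ℝ)..T, (∑ i, Set.indicator (Set.Ici (h i)) (g i k) t) := by
          refine Finset.sum_congr rfl fun k _ => ?_
          rw [intervalIntegral.integral_finset_sum (fun i _ => hφint i k 0 T)]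
      _ = ∫ t in (0:ℝ)..T, (∑ k, ∑ i, Set.indicator (Set.Ici (h i)) (g i k) t) := by
          have hsumint : ∀ k : Fin m, IntervalIntegrable
              (fun t => ∑ i, Set.indicator (Set.Ici (h i)) (g i k) t) MeasureTheory.volume 0 T := by
            intro k
            have := IntervalIntegrable.sum (μ := MeasureTheory.volume) (a := 0) (b := T)
              Finset.univ (fun i (_ : i ∈ Finset.univ) => hφint i k 0 T)
            have heq : (fun t : ℝ => ∑ i, Set.indicator (Set.Ici (h i)) (g i k) t)
                = ∑ i, Set.indicator (Set.Ici (h i)) (g i k) := by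
              ext t; simp [Finset.sum_apply]
            rw [heq]; exact this
          rw [intervalIntegral.integral_finset_sum (fun k _ => hsumint k)]
      _ = ∫ t in (0:ℝ)..T, f t * Complex.exp (-s * (t:ℂ)) :=
          intervalIntegral.integral_congr fun t _ => (hintegrand t).symm
  have part4 : ∀ k, ∃ U : Set ℂ, IsOpen U ∧ z k ∈ U ∧ ∃ Hext : ℂ → ℂ,
      DifferentiableOn ℂ Hext U ∧
      ∀ s ∈ U, s ≠ z k → Hext s = G s * d0.eval s / n0.eval s - F s := by
    intro k
    have hGdiff : Differentiable ℂ G := by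
      have : G = fun s => ∑ i, Gi i s * Complex.exp (-(h i : ℂ) * s) := funext hG
      rw [this]
      refine Differentiable.fun_sum fun i _ => (hGi i).mul ?_
      exact Complex.differentiable_exp.comp (differentiable_id.const_mul _)
    set p : Polynomial ℂ := n0 /ₘ (X - C (z k)) with hpdef
    have hfac : (X - C (z k)) * p = n0 := mul_divByMonic_eq_iff_isRoot.mpr (hn0 k)
    have hder : n0.derivative = p + (X - C (z k)) * p.derivative := by
      rw [← hfac, derivative_mul, derivative_sub, derivative_X, derivative_C]
      ring
    have hpz : p.eval (z k) ≠ 0 := by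
      have := hn0' k
      rw [hder] at this
      simpa using this
    have hn0ne : n0 ≠ 0 := fun e => hn0' k (by simp [e])
    set E : Finset ℂ := (n0.roots.toFinset ∪ Finset.univ.image z).erase (z k) with hEdef
    refine ⟨(↑E : Set ℂ)ᶜ, (E.finite_toSet.isClosed).isOpen_compl, by simp [hEdef], ?_⟩
    have hUn0 : ∀ s : ℂ, s ∈ (↑E : Set ℂ)ᶜ → s ≠ z k → n0.eval s ≠ 0 := by
      intro s hsU hszk he
      exact hsU (Finset.mem_erase.mpr ⟨hszk, Finset.mem_union_left _
        (Multiset.mem_toFinset.mpr ((mem_roots hn0ne).mpr he))⟩)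
    have hUzj : ∀ s : ℂ, s ∈ (↑E : Set ℂ)ᶜ → ∀ j, j ≠ k → s ≠ z j := by
      intro s hsU j hjk he
      refine hsU (Finset.mem_erase.mpr ⟨?_, Finset.mem_union_right _
        (Finset.mem_image.mpr ⟨j, Finset.mem_univ j, he.symm⟩)⟩)
      rw [he]
      exact fun e => hjk (hz e)
    have hUp : ∀ s : ℂ, s ∈ (↑E : Set ℂ)ᶜ → p.eval s ≠ 0 := by
      intro s hsU hpe
      rcases eq_or_ne s (z k) with rfl | hszk
      · exact hpz hpe
      · refine hUn0 s hsU hszk ?_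
        rw [← hfac]
        simp [hpe]
    set ψ : ℂ → ℂ := fun w => ∑ i, c i k * Complex.exp (-(h i:ℂ) * w) with hψdef
    have hψdiff : Differentiable ℂ ψ := by
      refine Differentiable.fun_sum fun i _ => Differentiable.const_mul ?_ _
      exact Complex.differentiable_exp.comp (differentiable_id.const_mul _)
    have hψz : ψ (z k) = 0 := part1 k
    refine ⟨fun w => dslope G (z k) w * d0.eval w / p.eval w
        - (∑ j ∈ Finset.univ.erase k, ∑ i, c i j * Complex.exp (-(h i:ℂ) * w) / (w - z j))
        - dslope ψ (z k) w, ?_, ?_⟩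
    · intro s hsU
      refine DifferentiableAt.differentiableWithinAt ?_
      refine DifferentiableAt.sub (DifferentiableAt.sub ?_ ?_) ?_
      · exact ((dslope_differentiable hGdiff (z k) s).mul
          (d0.differentiable.differentiableAt)).div
          (p.differentiable.differentiableAt) (hUp s hsU)
      · refine DifferentiableAt.fun_sum fun j hj => DifferentiableAt.fun_sum fun i _ => ?_
        have hsj : s - z j ≠ 0 :=
          sub_ne_zero.mpr (hUzj s hsU j (Finset.ne_of_mem_erase hj))
        exact (differentiableAt_const _ |>.mul
          (Complex.differentiable_exp.comp (differentiable_id.const_mul _) |>.differentiableAt)).div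
          (differentiableAt_id.sub_const _) hsj
      · exact (dslope_differentiable hψdiff (z k) s)
    · intro s hsU hszk
      have hn0s : n0.eval s ≠ 0 := hUn0 s hsU hszk
      have hps : p.eval s ≠ 0 := hUp s hsU
      have hszk' : s - z k ≠ 0 := sub_ne_zero.mpr hszk
      have hn0eval : n0.eval s = (s - z k) * p.eval s := by
        rw [← hfac]; simp
      have h1 : dslope G (z k) s * d0.eval s / p.eval s = G s * d0.eval s / n0.eval s := by
        rw [dslope_of_ne _ hszk, slope_def_field, hGz k, sub_zero, hn0eval]
        field_simp
      have h2 : dslope ψ (z k) s = ∑ i, c i k * Complex.exp (-(h i:ℂ) * s) / (s - z k) := by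
        rw [dslope_of_ne _ hszk, slope_def_field, hψz, sub_zero, hψdef]
        simp only
        rw [Finset.sum_div]
      have h3 : F s = (∑ j ∈ Finset.univ.erase k, ∑ i,
          c i j * Complex.exp (-(h i:ℂ) * s) / (s - z j))
          + ∑ i, c i k * Complex.exp (-(h i:ℂ) * s) / (s - z k) := by
        rw [hF s, Finset.sum_comm]
        exact (Finset.sum_erase_add _ _ (Finset.mem_univ k)).symm
      simp only [h1, h2, h3]
      ring
  exact ⟨part1, part2, part3, part4⟩
end
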